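/- For 0 < x ≤ 2, with r = 1/√(2x), θ = arctan(√((2−x)/x)) and ω = arctan(r sin θ/(1 − r cos θ)), the expression (ω + θ)·log r appearing in the triple-uniform-product density is well-defined and continuous on (0, 2), and the full density f₀(x) = (2/π)(√((2−x)/x) − arctan√((2−x)/x) − (1/2)(ω+θ)log r + (1/4)(Cl₂(2(ω+θ)) − Cl₂(2ω) − Cl₂(2θ))) tends to 0 as x → 2⁻. -/

import Mathlib

open Real

/-- The Clausen function of order 2. -/
noncomputable def Cl2 (α : ℝ) : ℝ := ∑' k : ℕ, Real.sin (((k : ℝ) + 1) * α) / ((k : ℝ) + 1) ^ 2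

noncomputable def rr (x : ℝ) : ℝ := 1 / Real.sqrt (2 * x)

noncomputable def θθ (x : ℝ) : ℝ := Real.arctan (Real.sqrt ((2 - x) / x))

noncomputable def ωω (x : ℝ) : ℝ :=
  Real.arctan (rr x * Real.sin (θθ x) / (1 - rr x * Real.cos (θθ x)))

/-- Closed-form density of the product of the random amplitude by three independent
uniform variables (restricted to positive abscissae). -/
noncomputable def f0 (x : ℝ) : ℝ :=
  (2 / π) * (Real.sqrt ((2 - x) / x) - Real.arctan (Real.sqrt ((2 - x) / x))
    - (1/2) * (ωω x + θθ x) * Real.log (rr x)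
    + (1/4) * (Cl2 (2 * (ωω x + θθ x)) - Cl2 (2 * ωω x) - Cl2 (2 * θθ x)))

@[fun_prop]
lemma continuous_Cl2 : Continuous Cl2 := by
  refine continuous_tsum (u := fun k : ℕ => 1 / ((k : ℝ) + 1) ^ 2) (fun k => by fun_prop) ?_ ?_
  · exact_mod_cast (summable_nat_add_iff 1).2 (Real.summable_one_div_nat_pow.2 one_lt_two)
  · intro k α
    rw [norm_div, Real.norm_eq_abs, Real.norm_eq_abs,
      abs_of_pos (a := ((k : ℝ) + 1) ^ 2) (by positivity)]
    gcongr
    exact Real.abs_sin_le_one _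

lemma Cl2_zero : Cl2 0 = 0 := by simp [Cl2]

lemma rr_pos {x : ℝ} (hx : 0 < x) : 0 < rr x := by
  rw [rr]; positivity

lemma θθ_two : θθ 2 = 0 := by norm_num [θθ]

lemma ωω_two : ωω 2 = 0 := by simp [ωω, θθ_two]

/-- Since `cos (arctan t) = 1 / √(1 + t²)` and `1 + (2 - x) / x = 2 / x`, the factors
`√(2x)` and `√(2/x)` cancel: the argument of the arctangent in `ωω` never has a pole. -/
lemma one_sub_rr_mul_cos_θθ {x : ℝ} (hx : 0 < x) (hx2 : x ≤ 2) :
    1 - rr x * Real.cos (θθ x) = 1 / 2 := by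
  have hsq : 1 + Real.sqrt ((2 - x) / x) ^ 2 = 2 / x := by
    rw [Real.sq_sqrt (div_nonneg (by linarith) hx.le)]
    field_simp; ring
  have hprod : Real.sqrt (2 * x) * Real.sqrt (2 / x) = 2 := by
    rw [← Real.sqrt_mul (by positivity), show 2 * x * (2 / x) = 2 ^ 2 by field_simp,
      Real.sqrt_sq zero_le_two]
  rw [θθ, Real.cos_arctan, hsq, rr, div_mul_div_comm, one_mul, hprod]
  norm_num

lemma continuousAt_rr {x : ℝ} (hx : 0 < x) : ContinuousAt rr x := by
  unfold rr
  fun_prop (disch := positivity)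

lemma continuousAt_θθ {x : ℝ} (hx : 0 < x) : ContinuousAt θθ x := by
  unfold θθ
  fun_prop (disch := exact hx.ne')

lemma continuousAt_ωω {x : ℝ} (hx : 0 < x) (hx2 : x ≤ 2) : ContinuousAt ωω x := by
  have := continuousAt_rr hx
  have := continuousAt_θθ hx
  unfold ωω
  fun_prop (disch := rw [one_sub_rr_mul_cos_θθ hx hx2]; norm_num)

lemma continuousAt_log_rr {x : ℝ} (hx : 0 < x) : ContinuousAt (fun y => Real.log (rr y)) x :=
  (continuousAt_rr hx).log (rr_pos hx).ne'

lemma continuousAt_f0_two : ContinuousAt f0 2 := by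
  have := continuousAt_θθ two_pos
  have := continuousAt_ωω two_pos le_rfl
  have := continuousAt_log_rr two_pos
  unfold f0
  fun_prop (disch := norm_num)

lemma f0_two : f0 2 = 0 := by simp [f0, θθ_two, ωω_two, Cl2_zero]

theorem triple_uniform_density_boundary :
    ContinuousOn (fun x => (ωω x + θθ x) * Real.log (rr x)) (Set.Ioo (0:ℝ) 2) ∧
    Filter.Tendsto f0 (nhdsWithin 2 (Set.Iio 2)) (nhds 0) := by
  refine ⟨fun x hx => ?_, ?_⟩
  · exact (((continuousAt_ωω hx.1 hx.2.le).add (continuousAt_θθ hx.1)).mul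
      (continuousAt_log_rr hx.1)).continuousWithinAt
  · exact f0_two ▸ continuousAt_f0_two.continuousWithinAt
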